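/- There is a polynomial p such that every formula F provable in CL5⁻ of size (length) k has a CL5⁻ proof whose size is at most p(k). -/

import Mathlib

namespace CirquentCalc

/-- Formulas: literals (negation applied only to atoms), ∧, ∨. -/
inductive Fml where
  | pos : ℕ → Fml
  | neg : ℕ → Fml
  | and : Fml → Fml → Fml
  | or : Fml → Fml → Fml
deriving DecidableEq

namespace Fml

/-- Negation (pushed to atoms, as ¬ applies only to atoms). -/
def negate : Fml → Fml
  | pos n => neg n
  | neg n => pos n
  | and a b => or a.negate b.negate
  | or a b => and a.negate b.negate

/-- Substitution extended homomorphically. -/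
def subst (σ : ℕ → Fml) : Fml → Fml
  | pos n => σ n
  | neg n => (σ n).negate
  | and a b => and (a.subst σ) (b.subst σ)
  | or a b => or (a.subst σ) (b.subst σ)

/-- Classical evaluation under a truth assignment. -/
def eval (v : ℕ → Bool) : Fml → Bool
  | pos n => v n
  | neg n => !(v n)
  | and a b => a.eval v && b.eval v
  | or a b => a.eval v || b.eval v

/-- Number of positive occurrences of atom `a`. -/
def cPos (a : ℕ) : Fml → ℕ
  | pos n => if n = a then 1 else 0
  | neg _ => 0
  | and f g => f.cPos a + g.cPos a
  | or f g => f.cPos a + g.cPos a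

/-- Number of negative occurrences of atom `a`. -/
def cNeg (a : ℕ) : Fml → ℕ
  | pos _ => 0
  | neg n => if n = a then 1 else 0
  | and f g => f.cNeg a + g.cNeg a
  | or f g => f.cNeg a + g.cNeg a

/-- Total number of positive occurrences of atoms. -/
def posOcc : Fml → ℕ
  | pos _ => 1
  | neg _ => 0
  | and f g => f.posOcc + g.posOcc
  | or f g => f.posOcc + g.posOcc

/-- Length: total number of occurrences of literals and connectives. -/
def len : Fml → ℕ
  | pos _ => 1
  | neg _ => 1
  | and f g => f.len + g.len + 1
  | or f g => f.len + g.len + 1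

/-- Number of occurrences of ∧. -/
def nAnd : Fml → ℕ
  | pos _ => 0
  | neg _ => 0
  | and f g => f.nAnd + g.nAnd + 1
  | or f g => f.nAnd + g.nAnd

/-- Number of occurrences of ∨. -/
def nOr : Fml → ℕ
  | pos _ => 0
  | neg _ => 0
  | and f g => f.nOr + g.nOr
  | or f g => f.nOr + g.nOr + 1

end Fml

def Tautology (A : Fml) : Prop := ∀ v, A.eval v = true

/-- No atom has more than two occurrences. -/
def Binary (A : Fml) : Prop := ∀ a, A.cPos a + A.cNeg a ≤ 2

/-- Whenever an atom occurs twice, one occurrence is positive and one negative. -/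
def Normal (A : Fml) : Prop := ∀ a, A.cPos a ≤ 1 ∧ A.cNeg a ≤ 1

def AtomicLevel (σ : ℕ → Fml) : Prop := ∀ n, ∃ m, σ n = Fml.pos m

/-- `F` is an instance of `B`: σ(B) = F for some substitution σ. -/
def InstanceOf (F B : Fml) : Prop := ∃ σ, B.subst σ = F

/-- `F` is an atomic-level instance of `B`. -/
def AtomicInstanceOf (F B : Fml) : Prop := ∃ σ, AtomicLevel σ ∧ B.subst σ = F

/-- A cirquent: a pool of (occurrences of) formulas, and a list of ogroups,
each an (index-)set of oformulas of the pool. -/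
structure Cirquent where
  pool : List Fml
  groups : List (Finset ℕ)

def emptyCirquent : Cirquent := ⟨[], []⟩

def idCirquent (F : Fml) : Cirquent := ⟨[F.negate, F], [{0, 1}]⟩

/-- The cirquent with pool ⟨F⟩ and one ogroup containing F. -/
def fmlCirquent (F : Fml) : Cirquent := ⟨[F], [{0}]⟩

/-- Index renaming swapping `i` and `i+1`. -/
def swapIdx (i : ℕ) : ℕ → ℕ := fun j => if j = i then i + 1 else if j = i + 1 then i else j

/-- Index renaming when a new oformula is inserted at position `i`. -/
def insShift (i : ℕ) : ℕ → ℕ := fun j => if j < i then j else j + 1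

/-- Index renaming when the oformulas at positions `i`, `i+1` are merged into one at `i`. -/
def mergeIdx (i : ℕ) : ℕ → ℕ := fun j => if j ≤ i then j else j - 1

/-- Mix: placing the two premise cirquents side by side. -/
def MixStep (A B C : Cirquent) : Prop :=
  C.pool = A.pool ++ B.pool ∧
  C.groups = A.groups ++ B.groups.map (Finset.image (· + A.pool.length))

/-- Oformula exchange: swap two adjacent oformulas, preserving containment. -/
def OfExchStep (P C : Cirquent) : Prop :=
  ∃ (l₁ l₂ : List Fml) (F G : Fml),
    P.pool = l₁ ++ F :: G :: l₂ ∧ C.pool = l₁ ++ G :: F :: l₂ ∧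
    C.groups = P.groups.map (Finset.image (swapIdx l₁.length))

/-- Ogroup exchange: swap two adjacent ogroups. -/
def OgExchStep (P C : Cirquent) : Prop :=
  C.pool = P.pool ∧
  ∃ (g₁ g₂ : List (Finset ℕ)) (Γ Δ : Finset ℕ),
    P.groups = g₁ ++ Γ :: Δ :: g₂ ∧ C.groups = g₁ ++ Δ :: Γ :: g₂

/-- Pool weakening: insert a new oformula, contained in no ogroup. -/
def PoolWeakStep (P C : Cirquent) : Prop :=
  ∃ (l₁ l₂ : List Fml) (F : Fml),
    P.pool = l₁ ++ l₂ ∧ C.pool = l₁ ++ F :: l₂ ∧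
    C.groups = P.groups.map (Finset.image (insShift l₁.length))

/-- Ogroup weakening: add a new arc between a pre-existing ogroup and oformula. -/
def OgWeakStep (P C : Cirquent) : Prop :=
  C.pool = P.pool ∧
  ∃ (g₁ g₂ : List (Finset ℕ)) (Γ : Finset ℕ) (j : ℕ),
    j < P.pool.length ∧ j ∉ Γ ∧
    P.groups = g₁ ++ Γ :: g₂ ∧ C.groups = g₁ ++ insert j Γ :: g₂

/-- Downward duplication: replace an ogroup by two adjacent copies of it. -/
def DupDownStep (P C : Cirquent) : Prop :=
  C.pool = P.pool ∧
  ∃ (g₁ g₂ : List (Finset ℕ)) (Γ : Finset ℕ),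
    P.groups = g₁ ++ Γ :: g₂ ∧ C.groups = g₁ ++ Γ :: Γ :: g₂

/-- Upward duplication: the converse of downward duplication. -/
def DupUpStep (P C : Cirquent) : Prop :=
  C.pool = P.pool ∧
  ∃ (g₁ g₂ : List (Finset ℕ)) (Γ : Finset ℕ),
    P.groups = g₁ ++ Γ :: Γ :: g₂ ∧ C.groups = g₁ ++ Γ :: g₂

/-- ∨-introduction: merge two adjacent oformulas F, G into F ∨ G. -/
def OrIntroStep (P C : Cirquent) : Prop :=
  ∃ (l₁ l₂ : List Fml) (F G : Fml),
    P.pool = l₁ ++ F :: G :: l₂ ∧ C.pool = l₁ ++ (Fml.or F G) :: l₂ ∧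
    C.groups = P.groups.map (Finset.image (mergeIdx l₁.length))

/-- The merging of the ogroup list in ∧-introduction: no ogroup contains both `i`
and `i+1`; every ogroup containing `i` is immediately followed by one containing
`i+1` and vice versa; such pairs are merged. -/
inductive AndMerge (i : ℕ) : List (Finset ℕ) → List (Finset ℕ) → Prop where
  | nil : AndMerge i [] []
  | skip {Γ : Finset ℕ} {l l' : List (Finset ℕ)} :
      i ∉ Γ → (i + 1) ∉ Γ → AndMerge i l l' → AndMerge i (Γ :: l) (Γ :: l')
  | merge {Γ Δ : Finset ℕ} {l l' : List (Finset ℕ)} :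
      i ∈ Γ → (i + 1) ∉ Γ → (i + 1) ∈ Δ → i ∉ Δ →
      AndMerge i l l' → AndMerge i (Γ :: Δ :: l) ((Γ ∪ Δ) :: l')

/-- ∧-introduction. -/
def AndIntroStep (P C : Cirquent) : Prop :=
  ∃ (l₁ l₂ : List Fml) (F G : Fml) (merged : List (Finset ℕ)),
    P.pool = l₁ ++ F :: G :: l₂ ∧ C.pool = l₁ ++ (Fml.and F G) :: l₂ ∧
    AndMerge l₁.length P.groups merged ∧
    C.groups = merged.map (Finset.image (mergeIdx l₁.length))

inductive RuleName where
  | emptyAx | idAx | mix | ofExch | ogExch | poolWeak | ogWeak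
  | dupDown | dupUp | orIntro | andIntro
deriving DecidableEq

/-- The unary (one-premise) rules, by name. -/
def unRel : RuleName → Cirquent → Cirquent → Prop
  | .ofExch => OfExchStep
  | .ogExch => OgExchStep
  | .poolWeak => PoolWeakStep
  | .ogWeak => OgWeakStep
  | .dupDown => DupDownStep
  | .dupUp => DupUpStep
  | .orIntro => OrIntroStep
  | .andIntro => AndIntroStep
  | _ => fun _ _ => False

/-- Proof trees: each node is labeled by its cirquent and the rule used. -/
inductive PTree where
  | leaf (C : Cirquent) (r : RuleName)
  | un (C : Cirquent) (r : RuleName) (p : PTree)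
  | bin (C : Cirquent) (r : RuleName) (p q : PTree)

namespace PTree

def concl : PTree → Cirquent
  | leaf C _ => C
  | un C _ _ => C
  | bin C _ _ _ => C

/-- Validity: each node follows from its children by the named rule. -/
def Valid : PTree → Prop
  | leaf C r =>
      (r = .emptyAx ∧ C = emptyCirquent) ∨ (r = .idAx ∧ ∃ F, C = idCirquent F)
  | un C r p => p.Valid ∧ unRel r p.concl C
  | bin C r p q => p.Valid ∧ q.Valid ∧ r = .mix ∧ MixStep p.concl q.concl C

/-- Number of applications of rule `r` in the proof. -/
def count (r : RuleName) : PTree → ℕ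
  | leaf _ r' => if r' = r then 1 else 0
  | un _ r' p => (if r' = r then 1 else 0) + p.count r
  | bin _ r' p q => (if r' = r then 1 else 0) + p.count r + q.count r

/-- The cirquents occurring in the proof. -/
def cirquents : PTree → List Cirquent
  | leaf C _ => [C]
  | un C _ p => C :: p.cirquents
  | bin C _ p q => C :: (p.cirquents ++ q.cirquents)

/-- Total number of rule applications (nodes). -/
def nodes : PTree → ℕ
  | leaf _ _ => 1
  | un _ _ p => p.nodes + 1
  | bin _ _ p q => p.nodes + q.nodes + 1

/-- Number of leaves of the proof tree. -/
def leavesCount : PTree → ℕ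
  | leaf _ _ => 1
  | un _ _ p => p.leavesCount
  | bin _ _ p q => p.leavesCount + q.leavesCount

end PTree

/-- A proof uses no duplication. -/
def DupFree (p : PTree) : Prop :=
  p.count RuleName.dupDown = 0 ∧ p.count RuleName.dupUp = 0

/-- Provability of a cirquent in CL5. -/
def ProvesC (C : Cirquent) : Prop := ∃ p : PTree, p.Valid ∧ p.concl = C

/-- Provability of a formula in CL5. -/
def ProvesCL5 (F : Fml) : Prop := ∃ p : PTree, p.Valid ∧ p.concl = fmlCirquent F

/-- Provability of a formula in CL5⁻ (CL5 without duplication). -/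
def ProvesCL5m (F : Fml) : Prop :=
  ∃ p : PTree, p.Valid ∧ DupFree p ∧ p.concl = fmlCirquent F

/-- Number of arcs of a cirquent (sum of the sizes of its ogroups). -/
def Cirquent.arcs (C : Cirquent) : ℕ := (C.groups.map Finset.card).sum

/-- Size of a cirquent: sum of the lengths of the oformulas in its pool plus
the sum of the sizes of its ogroups. -/
def Cirquent.size (C : Cirquent) : ℕ := (C.pool.map Fml.len).sum + C.arcs

/-- Size of a proof: the sum of the sizes of the cirquents it contains. -/
def PTree.size (p : PTree) : ℕ := (p.cirquents.map Cirquent.size).sum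

/-- Total number of positive occurrences of atoms in the pool. -/
def Cirquent.poolPosOcc (C : Cirquent) : ℕ := (C.pool.map Fml.posOcc).sum

end CirquentCalc

/-!
Without duplication no rule creates an ogroup except the identity axiom, which brings two pool
oformulas with it, and the pool size never decreases downwards; so every cirquent of a CL5⁻ proof
of `F` has at most `|F|` oformulas and ogroups, hence size `O(|F|²)`.

Every rule other than exchange and mix raises the potential
`pool size + arcs + (|F|² + 1) · connectives`, which is `O(|F|³)` at the root, so a proof has
`O(|F|³)` such steps. Between two of them, a run of exchanges only permutes the pool and the
ogroups, and a selection sort achieves the same permutation with `O(|F|²)` adjacent exchanges.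
Replacing every run of exchanges by such a sort, and dropping mixes with the empty cirquent,
leaves a proof with `O(|F|⁵)` cirquents of size `O(|F|²)`.
-/

namespace CirquentCalc

theorem Fml.one_le_len (F : Fml) : 1 ≤ F.len := by
  cases F <;> simp [Fml.len]

theorem Fml.len_negate (F : Fml) : F.negate.len = F.len := by
  induction F <;> simp [Fml.negate, Fml.len, *]

def Fml.connectives (F : Fml) : ℕ := F.nAnd + F.nOr

theorem Fml.connectives_le_len (F : Fml) : F.connectives ≤ F.len := by
  induction F <;> simp [Fml.connectives, Fml.nAnd, Fml.nOr, Fml.len] at * <;> omega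

namespace Cirquent

def poolSize (C : Cirquent) : ℕ := (C.pool.map Fml.len).sum

def connectives (C : Cirquent) : ℕ := (C.pool.map Fml.connectives).sum

def WellFormed (C : Cirquent) : Prop := ∀ Γ ∈ C.groups, ∀ j ∈ Γ, j < C.pool.length

theorem size_eq (C : Cirquent) : C.size = C.poolSize + C.arcs := rfl

theorem length_pool_le_poolSize (C : Cirquent) : C.pool.length ≤ C.poolSize := by
  unfold poolSize
  induction C.pool with
  | nil => simp
  | cons F l ih => simp only [List.map_cons, List.sum_cons, List.length_cons]; grind [F.one_le_len]

theorem arcs_le_of_wellFormed {C : Cirquent} (h : C.WellFormed) :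
    C.arcs ≤ C.groups.length * C.pool.length := by
  have hcard : ∀ k ∈ C.groups.map Finset.card, k ≤ C.pool.length := by
    simp only [List.mem_map]
    rintro _ ⟨Γ, hΓ, rfl⟩
    simpa using Finset.card_le_card fun j hj => Finset.mem_range.2 (h Γ hΓ j hj)
  simpa [arcs] using List.sum_le_card_nsmul _ _ hcard

end Cirquent

/-! ### Permutations and exchanges -/

theorem swapIdx_eq_swap (i : ℕ) : swapIdx i = Equiv.swap i (i + 1) := by
  funext j
  simp [swapIdx, Equiv.swap_apply_def]

theorem insShift_injective (i : ℕ) : Function.Injective (insShift i) := by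
  intro a b h
  simp only [insShift] at h
  split at h <;> split at h <;> omega

theorem _root_.List.ext_getD {α : Type*} {l l' : List α} (d : α) (hl : l.length = l'.length)
    (h : ∀ j < l.length, l.getD j d = l'.getD j d) : l = l' :=
  List.ext_getElem hl fun j h₁ h₂ => by
    simpa only [List.getD_eq_getElem _ _ h₁, List.getD_eq_getElem _ _ h₂] using h j h₁

/-- Moves the oformula at position `i` to position `σ i`. The default of `getD` is never read
when `σ` fixes every index `≥ l.length`. -/
def permPool (σ : Equiv.Perm ℕ) (l : List Fml) : List Fml :=
  (List.range l.length).map fun j => l.getD (σ.symm j) (.pos 0)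

@[simp] theorem length_permPool (σ : Equiv.Perm ℕ) (l : List Fml) :
    (permPool σ l).length = l.length := by
  simp [permPool]

theorem getD_permPool (σ : Equiv.Perm ℕ) (l : List Fml) {j : ℕ} (h : j < l.length) :
    (permPool σ l).getD j (.pos 0) = l.getD (σ.symm j) (.pos 0) := by
  simp [permPool, List.getD_eq_getElem?_getD, h]

theorem permPool_one (l : List Fml) : permPool 1 l = l :=
  (List.ext_getD (.pos 0) (by simp) fun j hj => by
    rw [getD_permPool _ _ (by simpa using hj)]; rfl).symm

theorem permPool_permPool {σ₁ σ₂ : Equiv.Perm ℕ} {l : List Fml}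
    (h₂ : ∀ j, l.length ≤ j → σ₂ j = j) :
    permPool σ₂ (permPool σ₁ l) = permPool (σ₂ * σ₁) l := by
  have hsymm : ∀ j < l.length, σ₂.symm j < l.length := fun j hj => by
    by_contra! hge
    have := h₂ _ hge
    simp only [Equiv.apply_symm_apply] at this
    omega
  refine List.ext_getD (.pos 0) (by simp) fun j hj => ?_
  simp only [length_permPool] at hj
  rw [getD_permPool _ _ (by simpa using hj), getD_permPool _ _ (hsymm j hj),
    getD_permPool _ _ hj]
  rfl

theorem permPool_swap (l₁ l₂ : List Fml) (a b : Fml) :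
    permPool (Equiv.swap l₁.length (l₁.length + 1)) (l₁ ++ a :: b :: l₂) =
      l₁ ++ b :: a :: l₂ := by
  refine List.ext_getD (.pos 0) (by simp) fun j hj => ?_
  rw [getD_permPool _ _ (by simpa using hj), Equiv.symm_swap]
  simp only [List.getD_eq_getElem?_getD, List.getElem?_append, List.getElem?_cons]
  rcases lt_trichotomy j l₁.length with h | rfl | h
  · rw [Equiv.swap_apply_of_ne_of_ne (by omega) (by omega)]
    simp [h]
  · simp
  · rcases eq_or_lt_of_le (Nat.succ_le_of_lt h) with rfl | h'
    · simp
    · rw [Equiv.swap_apply_of_ne_of_ne (by omega) (by omega)]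
      simp [show ¬ j < l₁.length by omega, show j - l₁.length ≠ 0 by omega,
        show j - l₁.length - 1 ≠ 0 by omega]

theorem map_image_of_forall_eq {f : ℕ → ℕ} (hf : ∀ j, f j = j) (gs : List (Finset ℕ)) :
    gs.map (Finset.image f) = gs :=
  (List.map_congr_left fun Γ _ => by rw [funext hf, Finset.image_id']; rfl).trans (List.map_id _)

namespace Cirquent

def permute (σ : Equiv.Perm ℕ) (X : Cirquent) : Cirquent :=
  ⟨permPool σ X.pool, X.groups.map (Finset.image σ)⟩

@[simp] theorem permute_one (X : Cirquent) : X.permute 1 = X := by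
  simp [permute, permPool_one, map_image_of_forall_eq]

theorem permute_permute {σ₁ σ₂ : Equiv.Perm ℕ} {X : Cirquent}
    (h₂ : ∀ j, X.pool.length ≤ j → σ₂ j = j) :
    (X.permute σ₁).permute σ₂ = X.permute (σ₂ * σ₁) := by
  simp only [permute, permPool_permPool h₂, List.map_map, mk.injEq, true_and]
  exact List.map_congr_left fun Γ _ => by simp [Finset.image_image]

end Cirquent

def ExchangeStep (X Y : Cirquent) : Prop := OfExchStep X Y ∨ OgExchStep X Y

def ExchangeReachable : Cirquent → Cirquent → Prop := Relation.ReflTransGen ExchangeStep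

theorem sum_card_map_image {f : ℕ → ℕ} (hf : Function.Injective f) (gs : List (Finset ℕ)) :
    ((gs.map (Finset.image f)).map Finset.card).sum = (gs.map Finset.card).sum := by
  simp [List.map_map, Function.comp_def, Finset.card_image_of_injective _ hf]

theorem ExchangeStep.size_eq {X Y : Cirquent} (h : ExchangeStep X Y) : Y.size = X.size := by
  rcases h with ⟨l₁, l₂, F, G, hP, hC, hG⟩ | ⟨hpool, g₁, g₂, Γ, Δ, hP, hC⟩
  · simp only [Cirquent.size, Cirquent.arcs, hP, hC, hG, List.map_append, List.sum_append,
      List.map_cons, List.sum_cons, swapIdx_eq_swap, sum_card_map_image (Equiv.injective _)]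
    omega
  · simp only [Cirquent.size, Cirquent.arcs, hpool, hP, hC, List.map_append, List.sum_append,
      List.map_cons, List.sum_cons]
    omega

theorem ExchangeStep.ne_empty {X Y : Cirquent} (h : ExchangeStep X Y) : X ≠ emptyCirquent := by
  rintro rfl
  rcases h with ⟨l₁, l₂, F, G, hP, -⟩ | ⟨-, g₁, g₂, Γ, Δ, hP, -⟩ <;>
    simp [emptyCirquent] at hP

def Rearrangement (X Y : Cirquent) : Prop :=
  ∃ σ : Equiv.Perm ℕ, (∀ j, X.pool.length ≤ j → σ j = j) ∧
    Y.pool = (X.permute σ).pool ∧ (X.permute σ).groups.Perm Y.groups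

theorem Rearrangement.refl (X : Cirquent) : Rearrangement X X :=
  ⟨1, fun _ _ => rfl, by simp, by simp⟩

theorem Rearrangement.trans {X Y Z : Cirquent} (h₁ : Rearrangement X Y)
    (h₂ : Rearrangement Y Z) : Rearrangement X Z := by
  obtain ⟨σ₁, hfix₁, hpool₁, hgroups₁⟩ := h₁
  obtain ⟨σ₂, hfix₂, hpool₂, hgroups₂⟩ := h₂
  have hlen : Y.pool.length = X.pool.length := by simp [hpool₁, Cirquent.permute]
  have hfix₂' : ∀ j, X.pool.length ≤ j → σ₂ j = j := fun j hj => hfix₂ j (hlen ▸ hj)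
  refine ⟨σ₂ * σ₁, fun j hj => by simp [hfix₁ j hj, hfix₂' j hj], ?_, ?_⟩
  · rw [← Cirquent.permute_permute hfix₂', hpool₂]
    simp only [Cirquent.permute, hpool₁]
  · rw [← Cirquent.permute_permute hfix₂']
    exact (hgroups₁.map _).trans hgroups₂

theorem ExchangeStep.rearrangement {X Y : Cirquent} (h : ExchangeStep X Y) : Rearrangement X Y := by
  rcases h with ⟨l₁, l₂, F, G, hP, hC, hG⟩ | ⟨hpool, g₁, g₂, Γ, Δ, hP, hC⟩
  · refine ⟨Equiv.swap l₁.length (l₁.length + 1), fun j hj => ?_, ?_, ?_⟩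
    · simp only [hP, List.length_append, List.length_cons] at hj
      exact Equiv.swap_apply_of_ne_of_ne (by omega) (by omega)
    · simp [Cirquent.permute, hP, hC, permPool_swap]
    · simp [Cirquent.permute, hG, swapIdx_eq_swap]
  · refine ⟨1, fun _ _ => rfl, by simp [hpool], ?_⟩
    simpa [hP, hC] using (List.Perm.swap Δ Γ g₂).append_left g₁

theorem ExchangeReachable.rearrangement {X Y : Cirquent} (h : ExchangeReachable X Y) :
    Rearrangement X Y := by
  induction h with
  | refl => exact Rearrangement.refl X
  | tail _ hs ih => exact ih.trans hs.rearrangement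

/-! ### Effect of the rules on size measures -/

section RuleFacts

variable {P C : Cirquent}

theorem unRel_poolSize {r : RuleName} (hr : unRel r P C) :
    P.poolSize + (if r = .poolWeak then 1 else 0) ≤ C.poolSize := by
  cases r <;> simp only [unRel] at hr <;> simp only [reduceCtorEq, if_true, if_false, add_zero]
  case ofExch | orIntro =>
    obtain ⟨l₁, l₂, F, G, hP, hC, -⟩ := hr
    simp [Cirquent.poolSize, hP, hC, Fml.len]
    omega
  case andIntro =>
    obtain ⟨l₁, l₂, F, G, -, hP, hC, -⟩ := hr
    simp [Cirquent.poolSize, hP, hC, Fml.len]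
    omega
  case poolWeak =>
    obtain ⟨l₁, l₂, F, hP, hC, -⟩ := hr
    simp [Cirquent.poolSize, hP, hC]
    grind [F.one_le_len]
  case ogExch | ogWeak | dupDown | dupUp =>
    obtain ⟨hpool, -⟩ := hr
    simp [Cirquent.poolSize, hpool]

theorem unRel_connectives {r : RuleName} (hr : unRel r P C) :
    P.connectives + (if r = .orIntro ∨ r = .andIntro then 1 else 0) ≤ C.connectives := by
  cases r <;> simp only [unRel] at hr <;>
    simp only [reduceCtorEq, or_self, or_true, true_or, if_true, if_false, add_zero]
  case ofExch | orIntro =>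
    obtain ⟨l₁, l₂, F, G, hP, hC, -⟩ := hr
    simp [Cirquent.connectives, hP, hC, Fml.connectives, Fml.nAnd, Fml.nOr]
    omega
  case andIntro =>
    obtain ⟨l₁, l₂, F, G, -, hP, hC, -⟩ := hr
    simp [Cirquent.connectives, hP, hC, Fml.connectives, Fml.nAnd, Fml.nOr]
    omega
  case poolWeak =>
    obtain ⟨l₁, l₂, F, hP, hC, -⟩ := hr
    simp [Cirquent.connectives, hP, hC]
  case ogExch | ogWeak | dupDown | dupUp =>
    obtain ⟨hpool, -⟩ := hr
    simp [Cirquent.connectives, hpool]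

theorem unRel_arcs {r : RuleName} (hr : unRel r P C) (hup : r ≠ .dupUp)
    (hor : r ≠ .orIntro) (hand : r ≠ .andIntro) :
    P.arcs + (if r = .ogWeak then 1 else 0) ≤ C.arcs := by
  cases r <;> simp only [unRel] at hr <;> simp only [reduceCtorEq, if_true, if_false, add_zero]
  case ofExch =>
    obtain ⟨l₁, -, -, -, -, -, hG⟩ := hr
    simp only [Cirquent.arcs, hG, swapIdx_eq_swap, sum_card_map_image (Equiv.injective _), le_refl]
  case poolWeak =>
    obtain ⟨l₁, -, -, -, -, hG⟩ := hr
    simp only [Cirquent.arcs, hG, sum_card_map_image (insShift_injective _), le_refl]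
  case ogExch =>
    obtain ⟨-, g₁, g₂, Γ, Δ, hP, hC⟩ := hr
    simp [Cirquent.arcs, hP, hC]
    omega
  case ogWeak =>
    obtain ⟨-, g₁, g₂, Γ, j, -, hj, hP, hC⟩ := hr
    simp [Cirquent.arcs, hP, hC, Finset.card_insert_of_notMem hj]
  case dupDown =>
    obtain ⟨-, g₁, g₂, Γ, hP, hC⟩ := hr
    simp [Cirquent.arcs, hP, hC]
  case dupUp | orIntro | andIntro => contradiction

theorem AndMerge.length_le {i : ℕ} {l l' : List (Finset ℕ)} (h : AndMerge i l l') :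
    l'.length ≤ l.length := by
  induction h <;> simp <;> omega

theorem AndMerge.exists_mem_of_mem {i j : ℕ} {l l' : List (Finset ℕ)} (h : AndMerge i l l')
    {Γ' : Finset ℕ} (hΓ' : Γ' ∈ l') (hj : j ∈ Γ') : ∃ Γ ∈ l, j ∈ Γ := by
  induction h with
  | nil => simp at hΓ'
  | skip _ _ _ ih => grind
  | merge _ _ _ _ _ ih => grind

theorem unRel_groups_length {r : RuleName} (hr : unRel r P C) (hdown : r ≠ .dupDown) :
    C.groups.length ≤ P.groups.length := by
  cases r <;> simp only [unRel] at hr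
  case ofExch | orIntro =>
    obtain ⟨l₁, -, -, -, -, -, hG⟩ := hr
    simp [hG]
  case poolWeak =>
    obtain ⟨l₁, -, -, -, -, hG⟩ := hr
    simp [hG]
  case ogExch =>
    obtain ⟨-, g₁, g₂, _, _, hP, hC⟩ := hr
    simp [hP, hC]
  case dupUp =>
    obtain ⟨-, g₁, g₂, _, hP, hC⟩ := hr
    simp [hP, hC]
  case ogWeak =>
    obtain ⟨-, g₁, g₂, _, _, -, -, hP, hC⟩ := hr
    simp [hP, hC]
  case andIntro =>
    obtain ⟨l₁, -, -, -, merged, -, -, hm, hG⟩ := hr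
    simpa [hG] using hm.length_le
  case dupDown => contradiction

theorem Cirquent.WellFormed.of_map_image {gs : List (Finset ℕ)} {f : ℕ → ℕ}
    (hgs : ∀ Γ ∈ gs, ∀ j ∈ Γ, j < P.pool.length) (hG : C.groups = gs.map (Finset.image f))
    (hf : ∀ j < P.pool.length, f j < C.pool.length) : C.WellFormed := by
  intro Γ hΓ j hj
  rw [hG, List.mem_map] at hΓ
  obtain ⟨Γ₀, hΓ₀, rfl⟩ := hΓ
  obtain ⟨j₀, hj₀, rfl⟩ := Finset.mem_image.1 hj
  exact hf j₀ (hgs Γ₀ hΓ₀ j₀ hj₀)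

theorem Cirquent.WellFormed.of_subset (hP : P.WellFormed) (hpool : C.pool = P.pool)
    (hgroups : C.groups ⊆ P.groups) : C.WellFormed :=
  fun Γ hΓ j hj => hpool ▸ hP Γ (hgroups hΓ) j hj

theorem unRel_wellFormed {r : RuleName} (hr : unRel r P C) (hP : P.WellFormed) :
    C.WellFormed := by
  cases r <;> simp only [unRel] at hr
  case ofExch =>
    obtain ⟨l₁, l₂, F, G, hPp, hCp, hG⟩ := hr
    refine .of_map_image hP hG fun j hj => ?_
    simp only [hPp, hCp, List.length_append, List.length_cons, swapIdx] at hj ⊢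
    split_ifs <;> omega
  case poolWeak =>
    obtain ⟨l₁, l₂, F, hPp, hCp, hG⟩ := hr
    refine .of_map_image hP hG fun j hj => ?_
    simp only [hPp, hCp, List.length_append, List.length_cons, insShift] at hj ⊢
    split_ifs <;> omega
  case orIntro =>
    obtain ⟨l₁, l₂, F, G, hPp, hCp, hG⟩ := hr
    refine .of_map_image hP hG fun j hj => ?_
    simp only [hPp, hCp, List.length_append, List.length_cons, mergeIdx] at hj ⊢
    split_ifs <;> omega
  case andIntro =>
    obtain ⟨l₁, l₂, F, G, merged, hPp, hCp, hm, hG⟩ := hr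
    refine .of_map_image (P := P) (fun Γ hΓ j hj => ?_) hG fun j hj => ?_
    · obtain ⟨Γ₀, hΓ₀, hj₀⟩ := hm.exists_mem_of_mem hΓ hj
      exact hP Γ₀ hΓ₀ j hj₀
    · simp only [hPp, hCp, List.length_append, List.length_cons, mergeIdx] at hj ⊢
      split_ifs <;> omega
  case ogExch =>
    obtain ⟨hpool, g₁, g₂, Γ, Δ, hPg, hCg⟩ := hr
    exact hP.of_subset hpool (by simp [hPg, hCg, List.subset_def]; tauto)
  case dupDown =>
    obtain ⟨hpool, g₁, g₂, Γ, hPg, hCg⟩ := hr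
    exact hP.of_subset hpool (by simp [hPg, hCg, List.subset_def])
  case dupUp =>
    obtain ⟨hpool, g₁, g₂, Γ, hPg, hCg⟩ := hr
    exact hP.of_subset hpool (by simp [hPg, hCg, List.subset_def])
  case ogWeak =>
    obtain ⟨hpool, g₁, g₂, Γ, j', hj', -, hPg, hCg⟩ := hr
    intro Δ hΔ j hj
    rw [hpool]
    simp only [hCg, List.mem_append, List.mem_cons] at hΔ
    rcases hΔ with hΔ | rfl | hΔ
    · exact hP Δ (by simp [hPg, hΔ]) j hj
    · rcases Finset.mem_insert.1 hj with rfl | hj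
      · exact hj'
      · exact hP Γ (by simp [hPg]) j hj
    · exact hP Δ (by simp [hPg, hΔ]) j hj

end RuleFacts

section MixFacts

variable {A B C : Cirquent}

theorem MixStep.poolSize_eq (h : MixStep A B C) : C.poolSize = A.poolSize + B.poolSize := by
  simp [Cirquent.poolSize, h.1]

theorem MixStep.connectives_eq (h : MixStep A B C) :
    C.connectives = A.connectives + B.connectives := by
  simp [Cirquent.connectives, h.1]

theorem MixStep.arcs_eq (h : MixStep A B C) : C.arcs = A.arcs + B.arcs := by
  simp only [Cirquent.arcs, h.2, List.map_append, List.sum_append,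
    sum_card_map_image (add_left_injective _)]

theorem MixStep.groups_length_eq (h : MixStep A B C) :
    C.groups.length = A.groups.length + B.groups.length := by
  simp [h.2]

theorem MixStep.wellFormed (h : MixStep A B C) (hA : A.WellFormed) (hB : B.WellFormed) :
    C.WellFormed := by
  intro Γ hΓ j hj
  rw [h.1, List.length_append]
  rw [h.2, List.mem_append, List.mem_map] at hΓ
  rcases hΓ with hΓ | ⟨Γ₀, hΓ₀, rfl⟩
  · exact Nat.lt_add_right _ (hA Γ hΓ j hj)
  · obtain ⟨j₀, hj₀, rfl⟩ := Finset.mem_image.1 hj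
    have := hB Γ₀ hΓ₀ j₀ hj₀
    omega

theorem MixStep.eq_of_left_empty (h : MixStep emptyCirquent B C) : C = B := by
  obtain ⟨pool, groups⟩ := C
  obtain ⟨hpool, hgroups⟩ := h
  simp only [emptyCirquent, List.nil_append, List.length_nil, add_zero] at hpool hgroups
  simp [hpool, hgroups, map_image_of_forall_eq]

theorem MixStep.eq_of_right_empty (h : MixStep A emptyCirquent C) : C = A := by
  obtain ⟨pool, groups⟩ := C
  obtain ⟨hpool, hgroups⟩ := h
  simp only [emptyCirquent, List.append_nil, List.map_nil] at hpool hgroups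
  simp [hpool, hgroups]

end MixFacts

/-! ### Invariants of CL5⁻ proofs -/

theorem DupFree.of_un {C : Cirquent} {r : RuleName} {p : PTree} (h : DupFree (.un C r p)) :
    r ≠ .dupDown ∧ r ≠ .dupUp ∧ DupFree p := by
  obtain ⟨h₁, h₂⟩ := h
  simp only [PTree.count, Nat.add_eq_zero_iff, ite_eq_right_iff, one_ne_zero, imp_false]
    at h₁ h₂
  exact ⟨h₁.1, h₂.1, h₁.2, h₂.2⟩

theorem DupFree.of_bin {C : Cirquent} {r : RuleName} {p q : PTree}
    (h : DupFree (.bin C r p q)) : DupFree p ∧ DupFree q := by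
  obtain ⟨h₁, h₂⟩ := h
  simp only [PTree.count, Nat.add_eq_zero_iff] at h₁ h₂
  exact ⟨⟨h₁.1.2, h₂.1.2⟩, h₁.2, h₂.2⟩

theorem DupFree.un {C : Cirquent} {r : RuleName} {p : PTree} (hdown : r ≠ .dupDown)
    (hup : r ≠ .dupUp) (h : DupFree p) : DupFree (.un C r p) := by
  obtain ⟨h₁, h₂⟩ := h
  exact ⟨by simp [PTree.count, hdown, h₁], by simp [PTree.count, hup, h₂]⟩

theorem DupFree.mix {C : Cirquent} {p q : PTree} (hp : DupFree p) (hq : DupFree q) :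
    DupFree (.bin C .mix p q) :=
  ⟨by simp [PTree.count, hp.1, hq.1], by simp [PTree.count, hp.2, hq.2]⟩

namespace PTree

theorem concl_mem_cirquents (p : PTree) : p.concl ∈ p.cirquents := by
  cases p <;> simp [concl, cirquents]

theorem length_cirquents (p : PTree) : p.cirquents.length = p.nodes := by
  induction p <;> simp [cirquents, nodes, *]

theorem forall_mem_cirquents_of_invariant {I : Cirquent → Prop} (hempty : I emptyCirquent)
    (hid : ∀ F, I (idCirquent F))
    (hun : ∀ {r P C}, r ≠ .dupDown → r ≠ .dupUp → unRel r P C → I P → I C)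
    (hmix : ∀ {A B C}, MixStep A B C → I A → I B → I C) {p : PTree} (hv : p.Valid)
    (hd : DupFree p) : ∀ X ∈ p.cirquents, I X := by
  suffices I p.concl ∧ ∀ X ∈ p.cirquents, I X from this.2
  induction p with
  | leaf C r =>
    rcases hv with ⟨-, rfl⟩ | ⟨-, F, rfl⟩ <;> simp [concl, cirquents, hempty, hid]
  | un C r q ih =>
    obtain ⟨hdown, hup, hdq⟩ := hd.of_un
    obtain ⟨ihc, ih⟩ := ih hv.1 hdq
    have hC : I C := hun hdown hup hv.2 ihc
    simpa [concl, cirquents, hC] using ih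
  | bin C r q₁ q₂ ih₁ ih₂ =>
    obtain ⟨hv₁, hv₂, -, hmixC⟩ := hv
    obtain ⟨hd₁, hd₂⟩ := hd.of_bin
    obtain ⟨ihc₁, ih₁⟩ := ih₁ hv₁ hd₁
    obtain ⟨ihc₂, ih₂⟩ := ih₂ hv₂ hd₂
    have hC : I C := hmix hmixC ihc₁ ihc₂
    refine ⟨hC, ?_⟩
    simp only [cirquents, List.mem_cons, List.mem_append]
    rintro X (rfl | hX | hX)
    exacts [hC, ih₁ X hX, ih₂ X hX]

theorem poolSize_le_of_mem_cirquents {p : PTree} (hv : p.Valid) :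
    ∀ X ∈ p.cirquents, X.poolSize ≤ p.concl.poolSize := by
  induction p with
  | leaf C r => simp [cirquents, concl]
  | un C r q ih =>
    have hle : q.concl.poolSize ≤ C.poolSize := (Nat.le_add_right _ _).trans (unRel_poolSize hv.2)
    simp only [cirquents, concl, List.mem_cons, forall_eq_or_imp, le_refl, true_and]
    exact fun X hX => (ih hv.1 X hX).trans hle
  | bin C r q₁ q₂ ih₁ ih₂ =>
    obtain ⟨hv₁, hv₂, -, hmix⟩ := hv
    have hsum := hmix.poolSize_eq
    simp only [cirquents, concl, List.mem_cons, List.mem_append, forall_eq_or_imp, le_refl,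
      true_and]
    rintro X (hX | hX)
    · have := ih₁ hv₁ X hX; omega
    · have := ih₂ hv₂ X hX; omega

end PTree

theorem Cirquent.wellFormed_of_mem_cirquents {p : PTree} (hv : p.Valid) (hd : DupFree p) :
    ∀ X ∈ p.cirquents, X.WellFormed := by
  refine PTree.forall_mem_cirquents_of_invariant ?_ ?_ (fun _ _ hr hP => unRel_wellFormed hr hP)
    (fun hmix hA hB => hmix.wellFormed hA hB) hv hd
  · simp [Cirquent.WellFormed, emptyCirquent]
  · intro F Γ hΓ j hj
    simp only [idCirquent, List.mem_singleton] at hΓ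
    subst hΓ
    simp only [Finset.mem_insert, Finset.mem_singleton] at hj
    simp only [idCirquent, List.length_cons, List.length_nil]
    omega

/-- Without duplication every ogroup stems from an identity axiom, which contributes at least
two to the pool size. -/
theorem Cirquent.two_mul_groups_length_le_of_mem_cirquents {p : PTree} (hv : p.Valid)
    (hd : DupFree p) : ∀ X ∈ p.cirquents, 2 * X.groups.length ≤ X.poolSize := by
  refine PTree.forall_mem_cirquents_of_invariant ?_ ?_ ?_ ?_ hv hd
  · simp [emptyCirquent]
  · intro F
    simp [idCirquent, Cirquent.poolSize, Fml.len_negate]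
    have := F.one_le_len
    omega
  · intro r P C hdown _ hr hP
    have := unRel_groups_length hr hdown
    have := unRel_poolSize hr
    omega
  · intro A B C hmix hA hB
    rw [hmix.groups_length_eq, hmix.poolSize_eq]
    omega

/-- The rules that cannot be iterated at will: each of them raises `potential` below. -/
def RuleName.weight : RuleName → ℕ
  | .idAx | .poolWeak | .ogWeak | .orIntro | .andIntro => 1
  | _ => 0

def PTree.weight : PTree → ℕ
  | .leaf _ r => r.weight
  | .un _ r p => r.weight + p.weight
  | .bin _ _ p q => p.weight + q.weight

/-- Pool weakening raises the pool size, ogroup weakening the arcs, and the introduction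
rules the connectives; the factor `M + 1` pays for the arcs an introduction may destroy,
as long as no cirquent has more than `M` arcs. -/
def potential (M : ℕ) (C : Cirquent) : ℕ := C.poolSize + C.arcs + (M + 1) * C.connectives

theorem potential_add_weight_le {M : ℕ} {r : RuleName} {P C : Cirquent} (hr : unRel r P C)
    (hdown : r ≠ .dupDown) (hup : r ≠ .dupUp) (hM : P.arcs ≤ M) :
    potential M P + r.weight ≤ potential M C := by
  have hpool := unRel_poolSize hr
  have hconn := unRel_connectives hr
  unfold potential
  by_cases hintro : r = .orIntro ∨ r = .andIntro
  · have hw : r.weight = 1 := by rcases hintro with rfl | rfl <;> rfl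
    rw [if_pos hintro] at hconn
    have : (M + 1) * (P.connectives + 1) ≤ (M + 1) * C.connectives := Nat.mul_le_mul_left _ hconn
    rw [hw, Nat.mul_succ] at *
    split_ifs at hpool <;> omega
  · have harcs := unRel_arcs hr hup (not_or.1 hintro).1 (not_or.1 hintro).2
    have hw : r.weight ≤ (if r = .poolWeak then 1 else 0) + (if r = .ogWeak then 1 else 0) := by
      cases r <;> simp_all [RuleName.weight, unRel]
    rw [if_neg hintro] at hconn
    have : (M + 1) * P.connectives ≤ (M + 1) * C.connectives := Nat.mul_le_mul_left _ (by omega)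
    split_ifs at hpool harcs hw <;> omega

theorem potential_idCirquent (M : ℕ) (F : Fml) : 1 ≤ potential M (idCirquent F) := by
  have := F.one_le_len
  simp only [potential, Cirquent.poolSize, idCirquent, List.map_cons, List.sum_cons]
  omega

theorem MixStep.potential_eq {M : ℕ} {A B C : Cirquent} (h : MixStep A B C) :
    potential M C = potential M A + potential M B := by
  simp only [potential, h.poolSize_eq, h.arcs_eq, h.connectives_eq]
  ring

theorem PTree.weight_le_potential {M : ℕ} {p : PTree} (hv : p.Valid) (hd : DupFree p)
    (hM : ∀ X ∈ p.cirquents, X.arcs ≤ M) : p.weight ≤ potential M p.concl := by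
  induction p with
  | leaf C r =>
    rcases hv with ⟨rfl, -⟩ | ⟨rfl, F, rfl⟩
    · simp [weight, RuleName.weight]
    · exact potential_idCirquent M F
  | un C r q ih =>
    obtain ⟨hdown, hup, hdq⟩ := hd.of_un
    have hq := ih hv.1 hdq fun X hX => hM X (List.mem_cons_of_mem _ hX)
    have hstep := potential_add_weight_le hv.2 hdown hup
      (hM _ (List.mem_cons_of_mem _ q.concl_mem_cirquents))
    simp only [weight, concl]
    omega
  | bin C r q₁ q₂ ih₁ ih₂ =>
    obtain ⟨hv₁, hv₂, -, hmix⟩ := hv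
    obtain ⟨hd₁, hd₂⟩ := hd.of_bin
    have h₁ := ih₁ hv₁ hd₁ fun X hX => hM X (by simp [cirquents, hX])
    have h₂ := ih₂ hv₂ hd₂ fun X hX => hM X (by simp [cirquents, hX])
    show q₁.weight + q₂.weight ≤ potential M C
    rw [hmix.potential_eq]
    omega

/-! ### Realizing a rearrangement by few exchanges -/

def ProvableWithin (S n : ℕ) (C : Cirquent) : Prop :=
  ∃ q : PTree, q.Valid ∧ DupFree q ∧ q.concl = C ∧ (∀ Z ∈ q.cirquents, Z.size ≤ S) ∧
    q.nodes ≤ n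

theorem provableWithin_emptyCirquent {S : ℕ} : ProvableWithin S 1 emptyCirquent :=
  ⟨.leaf _ .emptyAx, .inl ⟨rfl, rfl⟩, ⟨rfl, rfl⟩, rfl,
    by simp [PTree.cirquents, Cirquent.size, Cirquent.arcs, emptyCirquent], le_rfl⟩

theorem provableWithin_idCirquent {S : ℕ} (F : Fml) (hS : (idCirquent F).size ≤ S) :
    ProvableWithin S 1 (idCirquent F) :=
  ⟨.leaf _ .idAx, .inr ⟨rfl, F, rfl⟩, ⟨rfl, rfl⟩, rfl, by simp [PTree.cirquents, hS],
    le_rfl⟩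

namespace ProvableWithin

variable {S n m : ℕ} {A B C X Y : Cirquent}

theorem mono (h : ProvableWithin S n C) (hnm : n ≤ m) : ProvableWithin S m C :=
  let ⟨q, hv, hd, hc, hS, hn⟩ := h
  ⟨q, hv, hd, hc, hS, hn.trans hnm⟩

theorem size_le (h : ProvableWithin S n C) : C.size ≤ S := by
  obtain ⟨q, -, -, rfl, hS, -⟩ := h
  exact hS _ q.concl_mem_cirquents

theorem unary {r : RuleName} (h : ProvableWithin S n A) (hr : unRel r A C)
    (hdown : r ≠ .dupDown) (hup : r ≠ .dupUp) (hS : C.size ≤ S) :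
    ProvableWithin S (n + 1) C := by
  obtain ⟨q, hv, hd, rfl, hqS, hn⟩ := h
  refine ⟨.un C r q, ⟨hv, hr⟩, hd.un hdown hup, rfl, ?_, by simp [PTree.nodes, hn]⟩
  simpa [PTree.cirquents, hS] using hqS

theorem mix (hA : ProvableWithin S n A) (hB : ProvableWithin S m B) (h : MixStep A B C)
    (hS : C.size ≤ S) : ProvableWithin S (n + m + 1) C := by
  obtain ⟨p, hvp, hdp, rfl, hpS, hpn⟩ := hA
  obtain ⟨q, hvq, hdq, rfl, hqS, hqn⟩ := hB
  refine ⟨.bin C .mix p q, ⟨hvp, hvq, rfl, h⟩, hdp.mix hdq, rfl, ?_, ?_⟩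
  · simp only [PTree.cirquents, List.mem_cons, List.mem_append]
    rintro Z (rfl | hZ | hZ)
    exacts [hS, hpS Z hZ, hqS Z hZ]
  · simp only [PTree.nodes]
    omega

theorem exchangeStep (h : ProvableWithin S n X) (hs : ExchangeStep X Y) :
    ProvableWithin S (n + 1) Y := by
  have hS : Y.size ≤ S := hs.size_eq ▸ h.size_le
  rcases hs with hs | hs
  · exact h.unary (r := .ofExch) hs (by decide) (by decide) hS
  · exact h.unary (r := .ogExch) hs (by decide) (by decide) hS

end ProvableWithin

def bubblePerm : ℕ → ℕ → Equiv.Perm ℕ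
  | _, 0 => 1
  | t, d + 1 => bubblePerm (t + 1) d * Equiv.swap t (t + 1)

theorem bubblePerm_apply_of_not_mem {t d j : ℕ} (h : j < t ∨ t + d < j) :
    bubblePerm t d j = j := by
  induction d generalizing t with
  | zero => rfl
  | succ d ih =>
    rw [bubblePerm, Equiv.Perm.mul_apply, Equiv.swap_apply_of_ne_of_ne (by omega) (by omega)]
    exact ih (by omega)

theorem bubblePerm_apply_self (t d : ℕ) : bubblePerm t d t = t + d := by
  induction d generalizing t with
  | zero => rfl
  | succ d ih =>
    rw [bubblePerm, Equiv.Perm.mul_apply, Equiv.swap_apply_left, ih]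
    omega

namespace ProvableWithin

variable {S n : ℕ} {X : Cirquent}

theorem swap {t : ℕ} (h : ProvableWithin S n X) (ht : t + 1 < X.pool.length) :
    ProvableWithin S (n + 1) (X.permute (Equiv.swap t (t + 1))) := by
  have hsplit : X.pool = X.pool.take t ++ X.pool[t] :: X.pool[t + 1] :: X.pool.drop (t + 2) := by
    rw [List.getElem_cons_drop, List.getElem_cons_drop, List.take_append_drop]
  have hlen : (X.pool.take t).length = t := List.length_take_of_le (by omega)
  have hswap := permPool_swap (X.pool.take t) (X.pool.drop (t + 2)) X.pool[t] X.pool[t + 1]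
  rw [← hsplit, hlen] at hswap
  exact h.exchangeStep
    (.inl ⟨_, _, _, _, hsplit, hswap, by simp [Cirquent.permute, hlen, swapIdx_eq_swap]⟩)

theorem bubble {t d : ℕ} (h : ProvableWithin S n X) (htd : t + d < X.pool.length) :
    ProvableWithin S (n + d) (X.permute (bubblePerm t d)) := by
  induction d generalizing t n X with
  | zero => simpa [bubblePerm] using h
  | succ d ih =>
    have h' := ih (h.swap (t := t) (by omega)) (t := t + 1) (by simp [Cirquent.permute]; omega)
    rw [Cirquent.permute_permute fun j hj => bubblePerm_apply_of_not_mem (by omega),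
      ← bubblePerm] at h'
    exact h'.mono (by omega)

theorem permute {σ : Equiv.Perm ℕ} (m : ℕ) (h : ProvableWithin S n X)
    (hfix : ∀ j, m ≤ j → σ j = j) (hm : m ≤ X.pool.length) :
    ProvableWithin S (n + m ^ 2) (X.permute σ) := by
  induction m generalizing n X σ with
  | zero =>
    obtain rfl : σ = 1 := Equiv.ext fun j => hfix j (Nat.zero_le j)
    simpa using h
  | succ m ih =>
    -- selection sort: bubble the oformula bound for position `m` there, then sort `[0, m)`
    set t := σ.symm m
    have ht : t ≤ m := by
      by_contra! ht
      have := hfix t (by omega)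
      simp [t] at this
      omega
    set γ := bubblePerm t (m - t)
    have hγfix : ∀ j, m + 1 ≤ j → γ j = j := fun j hj =>
      bubblePerm_apply_of_not_mem (by omega)
    have hγt : γ t = m := by rw [bubblePerm_apply_self]; omega
    have hfix' : ∀ j, m ≤ j → (σ * γ⁻¹) j = j := by
      intro j hj
      rw [Equiv.Perm.mul_apply]
      rcases hj.eq_or_lt with rfl | hj
      · rw [Equiv.Perm.inv_eq_iff_eq.2 hγt.symm, Equiv.apply_symm_apply]
      · rw [Equiv.Perm.inv_eq_iff_eq.2 (hγfix j hj).symm, hfix j hj]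
    have h' := ih (h.bubble (t := t) (d := m - t) (by omega)) hfix'
      (by simp only [Cirquent.permute, length_permPool]; omega)
    rw [Cirquent.permute_permute fun j hj => hfix' j (by omega), inv_mul_cancel_right] at h'
    have hsq : (m + 1) ^ 2 = m ^ 2 + 2 * m + 1 := by ring
    exact h'.mono (by omega)

variable {P : List Fml}

theorem moveGroupToFront {Δ : Finset ℕ} {g₂ : List (Finset ℕ)} (g₁ : List (Finset ℕ)) :
    ∀ {pre n}, ProvableWithin S n ⟨P, pre ++ g₁ ++ Δ :: g₂⟩ →
      ProvableWithin S (n + g₁.length) ⟨P, pre ++ Δ :: (g₁ ++ g₂)⟩ := by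
  induction g₁ with
  | nil => intro pre n h; simpa using h
  | cons Γ rest ih =>
    intro pre n h
    have h' := ih (pre := pre ++ [Γ]) (by simpa using h)
    simp only [List.append_assoc, List.singleton_append] at h'
    have := h'.exchangeStep (Y := ⟨P, pre ++ Δ :: Γ :: (rest ++ g₂)⟩)
      (.inr ⟨rfl, pre, rest ++ g₂, Γ, Δ, rfl, rfl⟩)
    exact this.mono (by simp)

theorem permGroups {l l' : List (Finset ℕ)} (hl : l.Perm l') :
    ∀ {pre n}, ProvableWithin S n ⟨P, pre ++ l⟩ →
      ProvableWithin S (n + l.length ^ 2) ⟨P, pre ++ l'⟩ := by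
  induction l' generalizing l with
  | nil => simp [hl.eq_nil]
  | cons Δ l' ih =>
    intro pre n h
    obtain ⟨g₁, g₂, rfl⟩ := List.append_of_mem (hl.symm.subset List.mem_cons_self)
    have hrest : (g₁ ++ g₂).Perm l' := (List.perm_middle.symm.trans hl).cons_inv
    have h₁ := moveGroupToFront g₁ (by simpa using h)
    have h₂ := ih hrest (pre := pre ++ [Δ]) (by simpa using h₁)
    simp only [List.append_assoc, List.singleton_append, List.length_append,
      List.length_cons] at h₂ ⊢
    have hsq : (g₁.length + (g₂.length + 1)) ^ 2 =
        (g₁.length + g₂.length) ^ 2 + 2 * (g₁.length + g₂.length) + 1 := by ring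
    exact h₂.mono (by omega)

end ProvableWithin

theorem ProvableWithin.rearrangement {S n : ℕ} {X Y : Cirquent} (h : ProvableWithin S n X)
    (hXY : Rearrangement X Y) :
    ProvableWithin S (n + X.pool.length ^ 2 + X.groups.length ^ 2) Y := by
  obtain ⟨σ, hfix, hpool, hgroups⟩ := hXY
  have h₁ := h.permute X.pool.length hfix le_rfl
  have h₂ := permGroups hgroups (pre := []) (P := Y.pool) (by rw [hpool]; exact h₁)
  simpa [Cirquent.permute] using h₂

theorem ProvableWithin.exchangeReachable {S n N : ℕ} {X Y : Cirquent} (h : ProvableWithin S n X)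
    (hXY : ExchangeReachable X Y) (hpool : X.pool.length ≤ N) (hgroups : X.groups.length ≤ N) :
    ProvableWithin S (n + 2 * N ^ 2) Y :=
  (h.rearrangement hXY.rearrangement).mono (by nlinarith)

/-! ### Compressing runs of exchanges -/

/-- Fewer than `2 * K` nodes per weighted step of `p`, where `K = 2 * N ^ 2 + 2` pays for one
step (or one mix) together with the exchanges realizing the rearrangement that follows it. -/
def Compressible (N S : ℕ) (p : PTree) : Prop :=
  ∀ C', ExchangeReachable p.concl C' →
    ∃ n, n + (2 * N ^ 2 + 2) ≤ 2 * (2 * N ^ 2 + 2) * p.weight ∧ ProvableWithin S n C'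

section Compression

variable {N S : ℕ} {C : Cirquent} {r : RuleName}

theorem compressible_leaf (hv : (PTree.leaf C r).Valid) (hne : C ≠ emptyCirquent)
    (hpool : C.pool.length ≤ N) (hgroups : C.groups.length ≤ N) (hS : C.size ≤ S) :
    Compressible N S (.leaf C r) := by
  rcases hv with ⟨-, rfl⟩ | ⟨rfl, F, rfl⟩
  · exact absurd rfl hne
  intro C' hC'
  exact ⟨1 + 2 * N ^ 2, by simp [PTree.weight, RuleName.weight]; omega,
    (provableWithin_idCirquent F hS).exchangeReachable hC' hpool hgroups⟩

theorem compressible_weighted_step {q : PTree} (hr : unRel r q.concl C) (hdown : r ≠ .dupDown)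
    (hup : r ≠ .dupUp) (hw : r.weight = 1) (hpool : C.pool.length ≤ N)
    (hgroups : C.groups.length ≤ N) (hS : C.size ≤ S)
    (ih : q.concl ≠ emptyCirquent → Compressible N S q) : Compressible N S (.un C r q) := by
  intro C' hC'
  obtain ⟨n, hn, h⟩ :
      ∃ n, n ≤ 2 * (2 * N ^ 2 + 2) * q.weight + 1 ∧ ProvableWithin S n q.concl := by
    by_cases hq : q.concl = emptyCirquent
    · exact ⟨1, by omega, hq ▸ provableWithin_emptyCirquent⟩
    · obtain ⟨n, hn, h⟩ := ih hq _ .refl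
      exact ⟨n, by omega, h⟩
  refine ⟨n + 1 + 2 * N ^ 2, ?_, (h.unary hr hdown hup hS).exchangeReachable hC' hpool hgroups⟩
  simp only [PTree.weight, hw, Nat.mul_add (2 * (2 * N ^ 2 + 2))]
  omega

theorem compressible_un {q : PTree} (hv : (PTree.un C r q).Valid) (hd : DupFree (.un C r q))
    (hpool : C.pool.length ≤ N) (hgroups : C.groups.length ≤ N) (hS : C.size ≤ S)
    (ih : q.concl ≠ emptyCirquent → Compressible N S q) : Compressible N S (.un C r q) := by
  obtain ⟨hdown, hup, -⟩ := hd.of_un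
  have hr := hv.2
  have exchange (hexch : ExchangeStep q.concl C) (hw : r.weight = 0) :
      Compressible N S (.un C r q) := fun C' hC' => by
    simpa [PTree.weight, hw] using ih hexch.ne_empty C' (.head hexch hC')
  cases r
  case ofExch => exact exchange (.inl hr) rfl
  case ogExch => exact exchange (.inr hr) rfl
  case poolWeak | ogWeak | orIntro | andIntro =>
    exact compressible_weighted_step hr hdown hup rfl hpool hgroups hS ih
  all_goals simp_all [unRel]

theorem compressible_bin {q₁ q₂ : PTree} (hv : (PTree.bin C r q₁ q₂).Valid)
    (hne : C ≠ emptyCirquent) (hpool : C.pool.length ≤ N) (hgroups : C.groups.length ≤ N)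
    (hS : C.size ≤ S) (ih₁ : q₁.concl ≠ emptyCirquent → Compressible N S q₁)
    (ih₂ : q₂.concl ≠ emptyCirquent → Compressible N S q₂) :
    Compressible N S (.bin C r q₁ q₂) := by
  obtain ⟨-, -, -, hmix⟩ := hv
  intro C' hC'
  simp only [PTree.weight, Nat.mul_add (2 * (2 * N ^ 2 + 2))]
  by_cases hq₁ : q₁.concl = emptyCirquent
  · rw [hq₁] at hmix
    obtain rfl := hmix.eq_of_left_empty
    obtain ⟨n, hn, h⟩ := ih₂ hne C' hC'
    exact ⟨n, by omega, h⟩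
  by_cases hq₂ : q₂.concl = emptyCirquent
  · rw [hq₂] at hmix
    obtain rfl := hmix.eq_of_right_empty
    obtain ⟨n, hn, h⟩ := ih₁ hne C' hC'
    exact ⟨n, by omega, h⟩
  obtain ⟨n₁, hn₁, h₁⟩ := ih₁ hq₁ _ .refl
  obtain ⟨n₂, hn₂, h₂⟩ := ih₂ hq₂ _ .refl
  exact ⟨n₁ + n₂ + 1 + 2 * N ^ 2, by omega,
    (h₁.mix h₂ hmix hS).exchangeReachable hC' hpool hgroups⟩

theorem compressible {p : PTree} (hv : p.Valid) (hd : DupFree p)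
    (hbound : ∀ X ∈ p.cirquents, X.pool.length ≤ N ∧ X.groups.length ≤ N ∧ X.size ≤ S)
    (hne : p.concl ≠ emptyCirquent) : Compressible N S p := by
  induction p with
  | leaf C r =>
    obtain ⟨hpool, hgroups, hS⟩ := hbound C (by simp [PTree.cirquents])
    exact compressible_leaf hv hne hpool hgroups hS
  | un C r q ih =>
    obtain ⟨hpool, hgroups, hS⟩ := hbound C (by simp [PTree.cirquents])
    exact compressible_un hv hd hpool hgroups hS
      (ih hv.1 hd.of_un.2.2 fun X hX => hbound X (by simp [PTree.cirquents, hX]))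
  | bin C r q₁ q₂ ih₁ ih₂ =>
    obtain ⟨hpool, hgroups, hS⟩ := hbound C (by simp [PTree.cirquents])
    exact compressible_bin hv hne hpool hgroups hS
      (ih₁ hv.1 hd.of_bin.1 fun X hX => hbound X (by simp [PTree.cirquents, hX]))
      (ih₂ hv.2.1 hd.of_bin.2 fun X hX => hbound X (by simp [PTree.cirquents, hX]))

end Compression

theorem ProvableWithin.exists_size_le {S n : ℕ} {C : Cirquent} (h : ProvableWithin S n C) :
    ∃ q : PTree, q.Valid ∧ DupFree q ∧ q.concl = C ∧ q.size ≤ n * S := by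
  obtain ⟨q, hv, hd, hc, hS, hn⟩ := h
  refine ⟨q, hv, hd, hc, ?_⟩
  calc q.size ≤ (q.cirquents.map Cirquent.size).length • S :=
        List.sum_le_card_nsmul _ _ (by simpa using hS)
    _ = q.nodes * S := by rw [smul_eq_mul, List.length_map, q.length_cirquents]
    _ ≤ n * S := Nat.mul_le_mul_right _ hn

section ProofOfFormula

variable {F : Fml} {p : PTree}

theorem poolSize_fmlCirquent : (fmlCirquent F).poolSize = F.len := by
  simp [fmlCirquent, Cirquent.poolSize]

theorem poolSize_le_len_of_mem_cirquents (hv : p.Valid) (hc : p.concl = fmlCirquent F) :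
    ∀ X ∈ p.cirquents, X.poolSize ≤ F.len := fun X hX =>
  poolSize_fmlCirquent (F := F) ▸ hc ▸ p.poolSize_le_of_mem_cirquents hv X hX

theorem arcs_le_len_sq_of_mem_cirquents (hv : p.Valid) (hd : DupFree p)
    (hc : p.concl = fmlCirquent F) :
    ∀ X ∈ p.cirquents, X.arcs ≤ F.len ^ 2 := fun X hX => by
  have hsize := poolSize_le_len_of_mem_cirquents hv hc X hX
  have hpool := X.length_pool_le_poolSize
  have hgroups := Cirquent.two_mul_groups_length_le_of_mem_cirquents hv hd X hX
  exact (Cirquent.arcs_le_of_wellFormed (Cirquent.wellFormed_of_mem_cirquents hv hd X hX)).trans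
    (sq F.len ▸ Nat.mul_le_mul (by omega) (by omega))

theorem len_bounds_of_mem_cirquents (hv : p.Valid) (hd : DupFree p)
    (hc : p.concl = fmlCirquent F) :
    ∀ X ∈ p.cirquents, X.pool.length ≤ F.len ∧ X.groups.length ≤ F.len ∧
      X.size ≤ F.len + F.len ^ 2 := fun X hX => by
  have hsize := poolSize_le_len_of_mem_cirquents hv hc X hX
  have hpool := X.length_pool_le_poolSize
  have hgroups := Cirquent.two_mul_groups_length_le_of_mem_cirquents hv hd X hX
  have harcs := arcs_le_len_sq_of_mem_cirquents hv hd hc X hX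
  exact ⟨by omega, by omega, by rw [Cirquent.size_eq]; omega⟩

theorem weight_le_of_concl_eq_fmlCirquent (hv : p.Valid) (hd : DupFree p)
    (hc : p.concl = fmlCirquent F) : p.weight ≤ F.len + 1 + (F.len ^ 2 + 1) * F.len := by
  refine (p.weight_le_potential hv hd (arcs_le_len_sq_of_mem_cirquents hv hd hc)).trans ?_
  simp only [hc, potential, poolSize_fmlCirquent]
  have := F.connectives_le_len
  simp [fmlCirquent, Cirquent.connectives, Cirquent.arcs]
  gcongr

end ProofOfFormula

end CirquentCalc

open CirquentCalc

/-- There is a polynomial p such that every formula F provable in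
CL5⁻ of length k has a CL5⁻ proof of size at most p(k). -/
theorem cl5m_polysize_proofs :
    ∃ P : Polynomial ℕ, ∀ F : Fml, ProvesCL5m F →
      ∃ p : PTree, p.Valid ∧ DupFree p ∧ p.concl = fmlCirquent F ∧
        p.size ≤ P.eval F.len := by
  open Polynomial in
  refine ⟨2 * (2 * X ^ 2 + 2) * (X + 1 + (X ^ 2 + 1) * X) * (X + X ^ 2),
    fun F ⟨p, hv, hd, hc⟩ => ?_⟩
  have hne : p.concl ≠ emptyCirquent := by simp [hc, fmlCirquent, emptyCirquent]
  obtain ⟨n, hn, hq⟩ := compressible hv hd (len_bounds_of_mem_cirquents hv hd hc) hne _ .refl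
  obtain ⟨q, hqv, hqd, hqc, hqsize⟩ := hq.exists_size_le
  refine ⟨q, hqv, hqd, hqc.trans hc, hqsize.trans ?_⟩
  have hw := weight_le_of_concl_eq_fmlCirquent hv hd hc
  simp only [Polynomial.eval_mul, Polynomial.eval_add, Polynomial.eval_pow, Polynomial.eval_X,
    Polynomial.eval_ofNat, Polynomial.eval_one]
  gcongr
  calc n ≤ 2 * (2 * F.len ^ 2 + 2) * p.weight := by omega
    _ ≤ _ := by gcongr
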